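/- Let G ∈ ℝ^{m×r} have full column rank r, and suppose G = B · [G₁; 0] where B is an invertible m×m matrix and G₁ ∈ ℝ^{m₁×r}. Let Σ = B diag(Σ₁₁, S) Bᵀ with Σ₁₁ ∈ ℝ^{m₁×m₁} symmetric positive definite and S symmetric positive semidefinite. Then Gᵀ Σ⁺ G = G₁ᵀ Σ₁₁⁻¹ G₁, and this matrix is positive definite. -/

import Mathlib

open Matrix

/-! With `Σ = B diag(Σ₁₁, S) Bᵀ` and `G = B [G₁; 0]`, the matrix `G` lies both in the column
space of `Σ` and in that of `Σᵀ`: `G = Σ U = Σᵀ V` for `U = B⁻ᵀ [Σ₁₁⁻¹ G₁; 0]` and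
`V = B⁻ᵀ [Σ₁₁⁻ᵀ G₁; 0]`. Hence for every `X` with `Σ X Σ = Σ`, in particular `X = Σ⁺`,
`Gᵀ X G = Vᵀ Σ X Σ U = Vᵀ Σ U = Vᵀ G = G₁ᵀ Σ₁₁⁻¹ G₁`. Since `G` has full column rank so does
`G₁`, and `G₁ᵀ Σ₁₁⁻¹ G₁` is positive definite because `Σ₁₁⁻¹` is. -/

/-- `B` is the Moore–Penrose pseudoinverse of `A`: the four Penrose conditions. -/
def IsMoorePenrose {n m : Type*} [Fintype n] [Fintype m]
    (A : Matrix n m ℝ) (B : Matrix m n ℝ) : Prop :=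
  A * B * A = A ∧ B * A * B = B ∧ (A * B)ᵀ = A * B ∧ (B * A)ᵀ = B * A

namespace Matrix

theorem mulVec_injective_of_rank_eq_card {K m n : Type*} [Field K] [Fintype n]
    {A : Matrix m n K} (hA : A.rank = Fintype.card n) : Function.Injective A.mulVec := by
  rw [mulVec_injective_iff, linearIndependent_iff_card_eq_finrank_span, ← hA,
    rank_eq_finrank_span_cols, Set.finrank]

variable {R : Type*} {m n k : Type*} [Fintype m] [Fintype n]

theorem transpose_mul_mul_eq_of_mul_mul_eq_self [CommSemiring R] {M X : Matrix m m R}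
    (hX : M * X * M = M) {G U V : Matrix m k R} (hU : G = M * U) (hV : G = Mᵀ * V) :
    Gᵀ * X * G = Vᵀ * G :=
  calc Gᵀ * X * G = Vᵀ * (M * X * M) * U := by
        nth_rw 1 [hV]
        rw [hU, transpose_mul, transpose_transpose]
        simp only [Matrix.mul_assoc]
    _ = Vᵀ * G := by rw [hX, Matrix.mul_assoc, ← hU]

theorem mulVec_injective_of_mul_fromRows_zero [CommSemiring R] [Fintype k]
    {B : Matrix (m ⊕ n) (m ⊕ n) R} {G₁ : Matrix m k R}
    (h : Function.Injective (B * fromRows G₁ (0 : Matrix n k R)).mulVec) :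
    Function.Injective G₁.mulVec := by
  intro x y hxy
  apply h
  simp only [← mulVec_mulVec, fromRows_mulVec, zero_mulVec, hxy]

variable [DecidableEq m] [DecidableEq n] [CommRing R]

theorem mul_fromRows_zero_eq_mul_fromBlocks_mul_transpose_mul {B : Matrix (m ⊕ n) (m ⊕ n) R}
    (hB : IsUnit B.det) {A : Matrix m m R} (hA : IsUnit A.det) (S : Matrix n n R)
    (G₁ : Matrix m k R) :
    B * fromRows G₁ (0 : Matrix n k R) =
      B * fromBlocks A 0 0 S * Bᵀ * ((Bᵀ)⁻¹ * fromRows (A⁻¹ * G₁) (0 : Matrix n k R)) := by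
  have hBt : IsUnit Bᵀ.det := by rwa [det_transpose]
  simp only [Matrix.mul_assoc]
  rw [← Matrix.mul_assoc Bᵀ, mul_nonsing_inv _ hBt, Matrix.one_mul, fromBlocks_mul_fromRows,
    ← Matrix.mul_assoc, mul_nonsing_inv _ hA]
  simp

theorem transpose_inv_transpose_mul_fromRows_zero_mul {B : Matrix (m ⊕ n) (m ⊕ n) R}
    (hB : IsUnit B.det) (C : Matrix m m R) (G₁ : Matrix m k R) :
    ((Bᵀ)⁻¹ * fromRows (C * G₁) (0 : Matrix n k R))ᵀ * (B * fromRows G₁ (0 : Matrix n k R)) =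
      G₁ᵀ * Cᵀ * G₁ := by
  rw [transpose_mul, transpose_nonsing_inv, transpose_transpose, Matrix.mul_assoc,
    ← Matrix.mul_assoc B⁻¹, nonsing_inv_mul _ hB, Matrix.one_mul, transpose_fromRows,
    fromCols_mul_fromRows]
  simp [transpose_mul, Matrix.mul_assoc]

end Matrix

theorem pseudoinverse_quadratic_form_general (m₁ m₂ r : ℕ)
    (G₁ : Matrix (Fin m₁) (Fin r) ℝ)
    (B : Matrix (Fin m₁ ⊕ Fin m₂) (Fin m₁ ⊕ Fin m₂) ℝ) (hB : IsUnit B.det)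
    (S11 : Matrix (Fin m₁) (Fin m₁) ℝ) (hS11 : S11.PosDef)
    (S : Matrix (Fin m₂) (Fin m₂) ℝ)
    (G : Matrix (Fin m₁ ⊕ Fin m₂) (Fin r) ℝ)
    (hG : G = B * Matrix.fromRows G₁ 0)
    (hrank : G.rank = r)
    (Sigplus : Matrix (Fin m₁ ⊕ Fin m₂) (Fin m₁ ⊕ Fin m₂) ℝ)
    (hSigplus : IsMoorePenrose (B * Matrix.fromBlocks S11 0 0 S * Bᵀ) Sigplus) :
    Gᵀ * Sigplus * G = G₁ᵀ * S11⁻¹ * G₁ ∧ (Gᵀ * Sigplus * G).PosDef := by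
  obtain ⟨hSigma, -, -, -⟩ := hSigplus
  -- `hG` elaborates with the (defeq) `CStarMatrix` multiplication instance
  replace hG : G = B * fromRows G₁ (0 : Matrix (Fin m₂) (Fin r) ℝ) := hG
  have hA : IsUnit S11.det := (isUnit_iff_isUnit_det S11).mp hS11.isUnit
  have hAt : IsUnit S11ᵀ.det := by rwa [det_transpose]
  have hU := mul_fromRows_zero_eq_mul_fromBlocks_mul_transpose_mul hB hA S G₁
  have hV := mul_fromRows_zero_eq_mul_fromBlocks_mul_transpose_mul hB hAt Sᵀ G₁
  have hSigmaT : (B * fromBlocks S11 0 0 S * Bᵀ)ᵀ = B * fromBlocks S11ᵀ 0 0 Sᵀ * Bᵀ := by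
    simp [fromBlocks_transpose, Matrix.mul_assoc]
  rw [← hSigmaT] at hV
  have hform : Gᵀ * Sigplus * G = G₁ᵀ * S11⁻¹ * G₁ := by
    rw [transpose_mul_mul_eq_of_mul_mul_eq_self hSigma (hG.trans hU) (hG.trans hV), hG,
      transpose_inv_transpose_mul_fromRows_zero_mul hB, transpose_nonsing_inv,
      transpose_transpose]
  have hinj : Function.Injective G₁.mulVec := by
    subst hG
    exact mulVec_injective_of_mul_fromRows_zero
      (mulVec_injective_of_rank_eq_card (by rw [hrank, Fintype.card_fin]))
  refine ⟨hform, hform ▸ ?_⟩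
  simpa [conjTranspose_eq_transpose_of_trivial] using hS11.inv.conjTranspose_mul_mul_same hinj

/-- If G = B[G₁;0] with B invertible and Σ = B diag(Σ₁₁, S) Bᵀ, then
GᵀΣ⁺G = G₁ᵀΣ₁₁⁻¹G₁, which is positive definite. -/
theorem pseudoinverse_quadratic_form (m₁ m₂ r : ℕ)
    (G₁ : Matrix (Fin m₁) (Fin r) ℝ)
    (B : Matrix (Fin m₁ ⊕ Fin m₂) (Fin m₁ ⊕ Fin m₂) ℝ) (hB : IsUnit B.det)
    (S11 : Matrix (Fin m₁) (Fin m₁) ℝ) (hS11 : S11.PosDef)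
    (S : Matrix (Fin m₂) (Fin m₂) ℝ) (hS : S.PosSemidef)
    (G : Matrix (Fin m₁ ⊕ Fin m₂) (Fin r) ℝ)
    (hG : G = B * Matrix.fromRows G₁ 0)
    (hrank : G.rank = r)
    (Sigplus : Matrix (Fin m₁ ⊕ Fin m₂) (Fin m₁ ⊕ Fin m₂) ℝ)
    (hSigplus : IsMoorePenrose (B * Matrix.fromBlocks S11 0 0 S * Bᵀ) Sigplus) :
    Gᵀ * Sigplus * G = G₁ᵀ * S11⁻¹ * G₁ ∧ (Gᵀ * Sigplus * G).PosDef :=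
  pseudoinverse_quadratic_form_general m₁ m₂ r G₁ B hB S11 hS11 S G hG hrank Sigplus hSigplus
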